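/- Let A be a nonzero bounded linear operator on a complex Hilbert space with A² = 0. Then w(A) = (1/2)√(‖A*A + AA*‖). -/

import Mathlib

open scoped InnerProductSpace
open ContinuousLinearMap

/-- The numerical radius of a bounded linear operator. -/
noncomputable def numRadius {H : Type*} [NormedAddCommGroup H] [InnerProductSpace ℂ H]
    (A : H →L[ℂ] H) : ℝ :=
  sSup {r : ℝ | ∃ x : H, ‖x‖ = 1 ∧ r = ‖⟪A x, x⟫_ℂ‖}

/-- The Crawford number of a bounded linear operator. -/
noncomputable def crawford {H : Type*} [NormedAddCommGroup H] [InnerProductSpace ℂ H]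
    (A : H →L[ℂ] H) : ℝ :=
  sInf {r : ℝ | ∃ x : H, ‖x‖ = 1 ∧ r = ‖⟪A x, x⟫_ℂ‖}

/-- The real part of a bounded linear operator. -/
noncomputable def reP {H : Type*} [NormedAddCommGroup H] [InnerProductSpace ℂ H]
    [CompleteSpace H] (A : H →L[ℂ] H) : H →L[ℂ] H :=
  ((2 : ℂ)⁻¹) • (A + adjoint A)

/-- The imaginary part of a bounded linear operator. -/
noncomputable def imP {H : Type*} [NormedAddCommGroup H] [InnerProductSpace ℂ H]
    [CompleteSpace H] (A : H →L[ℂ] H) : H →L[ℂ] H :=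
  ((2 * Complex.I)⁻¹) • (A - adjoint A)

/-!
For `‖c‖ = 1` the operator `B = c • A + (c • A)†` is self-adjoint and, because `A ^ 2 = 0`,
`B ^ 2 = A†A + AA†`; by the C⋆-identity `‖B‖ = √‖A†A + AA†‖` whatever `c` is. Since
`re ⟪B x, x⟫ = 2 re (c̄ ⟪A x, x⟫)`, choosing `c` that rotates `⟪A x, x⟫` onto the positive real
axis gives `|⟪A x, x⟫| ≤ ‖B‖ / 2`, while the Rayleigh-quotient formula for the norm of the
self-adjoint `A + A†` gives `‖A + A†‖ ≤ 2 w(A)`.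
-/

lemma Complex.exists_norm_eq_one_conj_mul_eq_norm (z : ℂ) :
    ∃ c : ℂ, ‖c‖ = 1 ∧ starRingEnd ℂ c * z = ‖z‖ := by
  refine ⟨exp (z.arg * I), norm_exp_ofReal_mul_I _, ?_⟩
  conv_lhs => rw [← norm_mul_exp_arg_mul_I z]
  rw [← exp_conj, mul_left_comm, ← exp_add]
  simp

section NumericalRadius

variable {H : Type*} [NormedAddCommGroup H] [InnerProductSpace ℂ H]

lemma numRadius_nonneg (A : H →L[ℂ] H) : 0 ≤ numRadius A :=
  Real.sSup_nonneg <| by rintro _ ⟨x, -, rfl⟩; exact norm_nonneg _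

lemma norm_inner_self_le_numRadius (A : H →L[ℂ] H) {x : H} (hx : ‖x‖ = 1) :
    ‖⟪A x, x⟫_ℂ‖ ≤ numRadius A := by
  refine le_csSup ⟨‖A‖, ?_⟩ ⟨x, hx, rfl⟩
  rintro _ ⟨y, hy, rfl⟩
  calc ‖⟪A y, y⟫_ℂ‖ ≤ ‖A y‖ * ‖y‖ := norm_inner_le_norm _ _
    _ ≤ ‖A‖ * ‖y‖ * ‖y‖ := by gcongr; exact A.le_opNorm y
    _ = ‖A‖ := by rw [hy, mul_one, mul_one]

lemma numRadius_le {A : H →L[ℂ] H} {N : ℝ} (hN : 0 ≤ N)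
    (h : ∀ x : H, ‖x‖ = 1 → ‖⟪A x, x⟫_ℂ‖ ≤ N) : numRadius A ≤ N :=
  Real.sSup_le (by rintro _ ⟨x, hx, rfl⟩; exact h x hx) hN

variable [CompleteSpace H]

lemma re_inner_add_adjoint_apply_self (A : H →L[ℂ] H) (x : H) :
    RCLike.re ⟪(A + adjoint A) x, x⟫_ℂ = 2 * RCLike.re ⟪A x, x⟫_ℂ := by
  rw [add_apply, inner_add_left, map_add, adjoint_inner_left, inner_re_symm x]
  ring

lemma norm_add_adjoint_le_two_mul_numRadius (A : H →L[ℂ] H) :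
    ‖A + adjoint A‖ ≤ 2 * numRadius A := by
  have hsymm : ((A + adjoint A : H →L[ℂ] H) : H →ₗ[ℂ] H).IsSymmetric := by
    rw [← star_eq_adjoint]
    exact (IsSelfAdjoint.add_star_self A).isSymmetric
  rw [norm_eq_iSup_rayleighQuotient _ hsymm]
  refine ciSup_le fun x => ?_
  rcases eq_or_ne x 0 with rfl | hx
  · simpa using numRadius_nonneg A
  set u : H := ((‖x‖⁻¹ : ℝ) : ℂ) • x
  have hu : ‖u‖ = 1 := by
    rw [norm_smul, Complex.norm_real, norm_inv, norm_norm, inv_mul_cancel₀ (norm_ne_zero_iff.2 hx)]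
  rw [← rayleigh_smul _ x (c := ((‖x‖⁻¹ : ℝ) : ℂ)) (by simpa using hx), rayleighQuotient,
    reApplyInnerSelf_apply, hu, one_pow, div_one, re_inner_add_adjoint_apply_self, abs_mul,
    abs_two]
  gcongr
  exact (RCLike.abs_re_le_norm _).trans (norm_inner_self_le_numRadius A hu)

lemma exists_norm_inner_self_le_half_norm_smul_add_adjoint (A : H →L[ℂ] H) {x : H}
    (hx : ‖x‖ = 1) :
    ∃ c : ℂ, ‖c‖ = 1 ∧ ‖⟪A x, x⟫_ℂ‖ ≤ ‖c • A + adjoint (c • A)‖ / 2 := by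
  obtain ⟨c, hc, hcz⟩ := Complex.exists_norm_eq_one_conj_mul_eq_norm ⟪A x, x⟫_ℂ
  refine ⟨c, hc, ?_⟩
  have hre : 2 * ‖⟪A x, x⟫_ℂ‖ = RCLike.re ⟪(c • A + adjoint (c • A)) x, x⟫_ℂ := by
    rw [re_inner_add_adjoint_apply_self, smul_apply, inner_smul_left, hcz]
    simp
  have hle : RCLike.re ⟪(c • A + adjoint (c • A)) x, x⟫_ℂ ≤ ‖c • A + adjoint (c • A)‖ :=
    calc _ ≤ ‖(c • A + adjoint (c • A)) x‖ * ‖x‖ := re_inner_le_norm _ _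
      _ ≤ ‖c • A + adjoint (c • A)‖ := by
        simpa [hx] using (c • A + adjoint (c • A)).le_opNorm x
  linarith

lemma norm_add_adjoint_sq_of_sq_eq_zero {A : H →L[ℂ] H} (h : A ^ 2 = 0) :
    ‖A + adjoint A‖ ^ 2 = ‖adjoint A * A + A * adjoint A‖ := by
  have hA : A * A = 0 := by rw [← sq, h]
  have hA' : adjoint A * adjoint A = 0 := by rw [← star_eq_adjoint, ← star_mul, hA, star_zero]
  have hstar : star (A + adjoint A) = A + adjoint A := (IsSelfAdjoint.add_star_self A).star_eq
  rw [sq, ← CStarRing.norm_star_mul_self, hstar, add_mul, mul_add, mul_add, hA, hA', zero_add,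
    add_zero, add_comm]

lemma norm_smul_add_adjoint_sq_of_sq_eq_zero {A : H →L[ℂ] H} (h : A ^ 2 = 0) {c : ℂ}
    (hc : ‖c‖ = 1) : ‖c • A + adjoint (c • A)‖ ^ 2 = ‖adjoint A * A + A * adjoint A‖ := by
  have hc' : starRingEnd ℂ c * c = 1 := by
    rw [RCLike.conj_mul, hc]; simp
  rw [norm_add_adjoint_sq_of_sq_eq_zero (by rw [smul_pow, h, smul_zero]),
    LinearIsometryEquiv.map_smulₛₗ, smul_mul_smul_comm, smul_mul_smul_comm, hc', mul_comm c, hc',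
    one_smul, one_smul]

end NumericalRadius

theorem stmt17_general {H : Type*} [NormedAddCommGroup H] [InnerProductSpace ℂ H]
    [CompleteSpace H] (A : H →L[ℂ] H) (h2 : A ^ 2 = 0) :
    numRadius A = (1/2 : ℝ) * Real.sqrt ‖adjoint A * A + A * adjoint A‖ := by
  have hrot (c : ℂ) (hc : ‖c‖ = 1) :
      ‖c • A + adjoint (c • A)‖ = Real.sqrt ‖adjoint A * A + A * adjoint A‖ := by
    rw [← norm_smul_add_adjoint_sq_of_sq_eq_zero h2 hc, Real.sqrt_sq (norm_nonneg _)]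
  apply le_antisymm
  · refine numRadius_le (by positivity) fun x hx => ?_
    obtain ⟨c, hc, hle⟩ := exists_norm_inner_self_le_half_norm_smul_add_adjoint A hx
    rw [hrot c hc] at hle
    linarith
  · have h1 := hrot 1 norm_one
    rw [one_smul] at h1
    linarith [norm_add_adjoint_le_two_mul_numRadius A]

theorem stmt17 {H : Type*} [NormedAddCommGroup H] [InnerProductSpace ℂ H]
    [CompleteSpace H] [Nontrivial H] (A : H →L[ℂ] H) (hA : A ≠ 0) (h2 : A ^ 2 = 0) :
    numRadius A = (1/2 : ℝ) * Real.sqrt ‖adjoint A * A + A * adjoint A‖ :=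
  stmt17_general A h2
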